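/- arXiv:1506.02742 — 8 statements merged into one kernel-verified Lean document; each statement's English description precedes it below -/
import Mathlib

section
/- Let p be a prime, i ≥ 0, and x_1,...,x_n ∈ {0,1,...,p-1} viewed as elements of F_p. Then the i-th base-p digit of the integer x_1 + ... + x_n, regarded as an element of F_p, equals the sum over all tuples (d_1,...,d_n) with each d_j ∈ {0,...,p-1} and d_1 + ... + d_n = p^i, of ∏_{j=1}^n (1/d_j!) · x_j(x_j - 1)···(x_j - d_j + 1), computed in F_p (where 1/d_j! denotes the inverse of d_j! in F_p). -/
/-!
By Lucas's theorem the `i`-th base-`p` digit of `S` is `S.choose (p ^ i)` modulo `p`. Writing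
`S = ∑ j, v j` with `v j = (x j).val`, Vandermonde's identity expands `S.choose (p ^ i)` as a sum,
over the tuples `d` with `∑ j, d j = p ^ i`, of `∏ j, (v j).choose (d j)`. Since `v j < p`, only
tuples with all `d j < p` contribute, and for those `d j !` is invertible in `𝔽_p`, so
`(v j).choose (d j) = (d j !)⁻¹ * x j (x j - 1) ⋯ (x j - d j + 1)`.
-/

open Finset Nat

theorem Nat.choose_sum_eq_sum_finsuppAntidiag_prod_choose {ι : Type*} [DecidableEq ι]
    (s : Finset ι) (v : ι → ℕ) (m : ℕ) :
    (∑ i ∈ s, v i).choose m = ∑ l ∈ s.finsuppAntidiag m, ∏ i ∈ s, (v i).choose (l i) := by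
  have coeff_one_add_X_pow (k j : ℕ) :
      PowerSeries.coeff j ((1 + PowerSeries.X : PowerSeries ℕ) ^ k) = k.choose j := by
    rw [← Polynomial.coe_X, ← Polynomial.coe_one, ← Polynomial.coe_add, ← Polynomial.coe_pow,
      Polynomial.coeff_coe, Polynomial.coeff_one_add_X_pow, Nat.cast_id]
  simp only [← coeff_one_add_X_pow, ← PowerSeries.coeff_prod, prod_pow_eq_pow_sum]

theorem Choose.choose_pow_modEq_div_pow_mod {p : ℕ} [Fact p.Prime] (i S : ℕ) :
    S.choose (p ^ i) ≡ S / p ^ i % p [MOD p] := by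
  induction i generalizing S with
  | zero => simpa using (Nat.mod_modEq S p).symm
  | succ i ih =>
    have hp := (Fact.out : p.Prime).pos
    have hmod : p ^ (i + 1) % p = 0 := by rw [pow_succ, Nat.mul_mod_left]
    have hdiv : p ^ (i + 1) / p = p ^ i := by rw [pow_succ, Nat.mul_div_cancel _ hp]
    calc S.choose (p ^ (i + 1))
        ≡ (S % p).choose (p ^ (i + 1) % p) * (S / p).choose (p ^ (i + 1) / p) [MOD p] :=
          Choose.choose_modEq_choose_mod_mul_choose_div_nat
      _ = (S / p).choose (p ^ i) := by rw [hmod, hdiv, choose_zero_right, one_mul]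
      _ ≡ S / p / p ^ i % p [MOD p] := ih (S / p)
      _ = S / p ^ (i + 1) % p := by rw [Nat.div_div_eq_div_mul, ← pow_succ']

theorem Nat.cast_choose_eq_inv_factorial_mul_prod {K : Type*} [Field K] (n d : ℕ)
    (hd : (d ! : K) ≠ 0) :
    (n.choose d : K) = (d ! : K)⁻¹ * ∏ k ∈ range d, ((n : K) - k) := by
  rw [← descPochhammer_eval_eq_prod_range, descPochhammer_eval_eq_descFactorial,
    descFactorial_eq_factorial_mul_choose, cast_mul, inv_mul_cancel_left₀ hd]

theorem ZMod.natCast_factorial_ne_zero {p d : ℕ} [Fact p.Prime] (hd : d < p) :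
    (d ! : ZMod p) ≠ 0 := by
  rw [Ne, ZMod.natCast_eq_zero_iff, (Fact.out : p.Prime).dvd_factorial]
  omega

theorem stmt_5 (p i n : ℕ) (hp : p.Prime) (x : Fin n → ZMod p) :
    (((∑ j, (x j).val) / p ^ i % p : ℕ) : ZMod p)
      = ∑ d ∈ Finset.univ.filter (fun d : Fin n → Fin p => ∑ j, (d j : ℕ) = p ^ i),
          ∏ j : Fin n,
            (((d j : ℕ).factorial : ZMod p))⁻¹ *
              ∏ k ∈ Finset.range (d j : ℕ), (x j - (k : ZMod p)) := by
  have := Fact.mk hp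
  rw [← (ZMod.natCast_eq_natCast_iff _ _ _).2 (Choose.choose_pow_modEq_div_pow_mod i _),
    choose_sum_eq_sum_finsuppAntidiag_prod_choose, Nat.cast_sum]
  symm
  refine sum_of_injOn (fun d => Finsupp.equivFunOnFinite.symm fun j => (d j : ℕ)) ?_ ?_ ?_ ?_
  · intro d _ e _ hde
    funext j
    exact Fin.ext (DFunLike.congr_fun hde j)
  · intro d hd
    simpa using hd
  · intro l hl hl_image
    obtain ⟨j, hj⟩ : ∃ j, p ≤ l j := by
      by_contra! h
      exact hl_image ⟨fun j => ⟨l j, h j⟩, by simpa using hl, by ext; simp⟩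
    rw [prod_eq_zero (mem_univ j) (choose_eq_zero_of_lt ((x j).val_lt.trans_le hj)), cast_zero]
  · intro d _
    rw [cast_prod]
    refine prod_congr rfl fun j _ => ?_
    rw [Finsupp.equivFunOnFinite_symm_apply_apply,
      cast_choose_eq_inv_factorial_mul_prod _ _ (ZMod.natCast_factorial_ne_zero (d j).isLt),
      ZMod.natCast_zmod_val]
end

section
/- Let p = 2 and i ≥ 0. For x_1,...,x_n ∈ F_2, the i-th binary digit of the integer sum (x_1)_Z + ... + (x_n)_Z, regarded as an element of F_2, equals the elementary symmetric polynomial e_{2^i}(x_1,...,x_n) evaluated over F_2. -/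
/-!
Both sides only depend on the number `m` of indices with `x j = 1`: the sum of integer
representatives is `m`, and a product `∏ j ∈ S, x j` is `1` exactly when `S` lies inside these
`m` indices, so `e_{2^i}(x)` counts the `2^i`-subsets of an `m`-set and equals `m.choose (2^i)`.
By Lucas's theorem, `m.choose (p^i)` is the `i`-th base-`p` digit of `m` modulo `p`.
-/

open Finset

theorem Nat.choose_prime_pow_modEq (p : ℕ) [hp : Fact p.Prime] (m i : ℕ) :
    m.choose (p ^ i) ≡ m / p ^ i % p [MOD p] := by
  induction i generalizing m with
  | zero => simpa using (Nat.mod_modEq m p).symm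
  | succ i ih =>
    have hlow : p ^ (i + 1) % p = 0 := by rw [pow_succ, Nat.mul_mod_left]
    have hhigh : p ^ (i + 1) / p = p ^ i := by rw [pow_succ, Nat.mul_div_cancel _ hp.out.pos]
    calc m.choose (p ^ (i + 1))
        ≡ (m % p).choose 0 * (m / p).choose (p ^ i) [MOD p] := by
          simpa only [hlow, hhigh] using
            Choose.choose_modEq_choose_mod_mul_choose_div_nat (p := p) (n := m) (k := p ^ (i + 1))
      _ ≡ m / p / p ^ i % p [MOD p] := by simpa using ih (m / p)
      _ = m / p ^ (i + 1) % p := by rw [Nat.div_div_eq_div_mul, ← pow_succ']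

theorem Finset.sum_powersetCard_prod_of_zero_or_one {ι R : Type*} [CommSemiring R]
    [DecidableEq ι] [DecidableEq R] (s : Finset ι) (k : ℕ) (f : ι → R)
    (hf : ∀ j ∈ s, f j = 0 ∨ f j = 1) :
    ∑ S ∈ s.powersetCard k, ∏ j ∈ S, f j = ((#{j ∈ s | f j = 1}).choose k : R) := by
  have hprod : ∀ S ∈ s.powersetCard k,
      ∏ j ∈ S, f j = if S ⊆ {j ∈ s | f j = 1} then 1 else 0 := by
    intro S hS'
    split_ifs with hS
    · exact prod_eq_one fun j hj => (mem_filter.mp (hS hj)).2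
    · obtain ⟨j, hjS, hj⟩ := not_subset.mp hS
      have hjs : j ∈ s := (mem_powersetCard.mp hS').1 hjS
      exact prod_eq_zero hjS ((hf j hjs).resolve_right fun h => hj (mem_filter.mpr ⟨hjs, h⟩))
  have hsubsets : {S ∈ s.powersetCard k | S ⊆ {j ∈ s | f j = 1}}
      = powersetCard k {j ∈ s | f j = 1} := by
    ext S
    simp only [mem_filter, mem_powersetCard]
    exact ⟨fun ⟨⟨_, hk⟩, hS⟩ => ⟨hS, hk⟩,
      fun ⟨hS, hk⟩ => ⟨⟨hS.trans (filter_subset _ _), hk⟩, hS⟩⟩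
  rw [sum_congr rfl hprod, sum_boole, hsubsets, card_powersetCard]

theorem ZMod.sum_val_eq_card_filter_eq_one {ι : Type*} (s : Finset ι) (x : ι → ZMod 2) :
    ∑ j ∈ s, (x j).val = #{j ∈ s | x j = 1} := by
  rw [card_filter]
  have hval : ∀ a : ZMod 2, a.val = if a = 1 then 1 else 0 := by decide
  exact sum_congr rfl fun j _ => hval (x j)

theorem stmt_6 (i n : ℕ) (x : Fin n → ZMod 2) :
    (((∑ j, (x j).val) / 2 ^ i % 2 : ℕ) : ZMod 2)
      = ∑ S ∈ Finset.powersetCard (2 ^ i) (Finset.univ : Finset (Fin n)),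
          ∏ j ∈ S, x j := by
  have hbit : ∀ a : ZMod 2, a = 0 ∨ a = 1 := by decide
  rw [sum_powersetCard_prod_of_zero_or_one _ _ _ (fun j _ => hbit (x j)),
    ZMod.sum_val_eq_card_filter_eq_one]
  exact ((ZMod.natCast_eq_natCast_iff _ _ _).mpr (Nat.choose_prime_pow_modEq 2 _ i)).symm
end

section
/- Let p be a prime and x_1, x_2 ∈ F_p. The carry in the addition of the two single base-p digits, i.e., ⌊((x_1)_Z + (x_2)_Z)/p⌋ regarded as an element of F_p, equals ∑_{d=1}^{p-1} (-1)^d (1/d) · x_1(x_1-1)···(x_1-d+1) · x_2(x_2-1)···(x_2-(p-d)+1), computed in F_p. -/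
/-!
Write `a = x₁.val`, `b = x₂.val`. Since `a (a - 1) ⋯ (a - d + 1) = d! C(a, d)` and, by Wilson's
theorem, `(d - 1)! (p - d)! = (-1)^d` in `𝔽_p`, the `d`-th summand is `C(a, d) C(b, p - d)`.
As `a, b < p`, Vandermonde's identity turns the sum into `C(a + b, p)`, which by Lucas' theorem
is `⌊(a + b) / p⌋` modulo `p`.
-/

open Finset Nat

theorem Nat.sum_Icc_choose_mul_choose_sub_eq_add_choose {a b n : ℕ} (ha : a < n) (hb : b < n) :
    ∑ d ∈ Icc 1 (n - 1), a.choose d * b.choose (n - d) = (a + b).choose n := by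
  rw [add_choose_eq, Nat.sum_antidiagonal_eq_sum_range_succ fun i j => a.choose i * b.choose j]
  refine sum_subset (fun d hd => by simp only [mem_Icc, mem_range] at hd ⊢; omega) ?_
  intro d hd hdIcc
  simp only [mem_Icc, mem_range] at hd hdIcc
  rcases Nat.eq_zero_or_pos d with rfl | hd0
  · simp [choose_eq_zero_of_lt hb]
  · simp [choose_eq_zero_of_lt (show a < d by omega)]

theorem Finset.prod_range_natCast_sub_eq_descFactorial {R : Type*} [CommRing R] (n k : ℕ) :
    ∏ i ∈ range k, ((n : R) - i) = n.descFactorial k := by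
  rw [prod_range_natCast_sub, descFactorial_eq_prod_range]

namespace ZMod

variable {p : ℕ} [Fact p.Prime]

theorem natCast_choose_prime (n : ℕ) : ((n.choose p : ℕ) : ZMod p) = (n / p : ℕ) := by
  rw [ZMod.natCast_eq_natCast_iff]
  simpa [Nat.div_self (Fact.out : p.Prime).pos] using
    Choose.choose_modEq_choose_mod_mul_choose_div_nat (n := n) (k := p) (p := p)

theorem natCast_descFactorial_sub_one (k : ℕ) :
    ((p - 1).descFactorial k : ZMod p) = (-1) ^ k * k ! := by
  rw [← prod_range_natCast_sub_eq_descFactorial, Nat.cast_pred (Fact.out : p.Prime).pos,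
    natCast_self, ← prod_range_add_one_eq_factorial, Nat.cast_prod]
  have hfactor (i : ℕ) : (0 - 1 - i : ZMod p) = -1 * (i + 1 : ℕ) := by push_cast; ring
  simp_rw [hfactor, prod_mul_distrib, prod_const, card_range]

theorem factorial_mul_factorial_sub_one_sub {k : ℕ} (hk : k < p) :
    (k ! * (p - 1 - k)! : ZMod p) = (-1) ^ (k + 1) := by
  have h := congrArg (Nat.cast : ℕ → ZMod p) (factorial_mul_descFactorial (show k ≤ p - 1 by omega))
  rw [Nat.cast_mul, natCast_descFactorial_sub_one, wilsons_lemma] at h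
  linear_combination
    (-1) ^ k * h - (k ! * (p - 1 - k)! : ZMod p) * (even_two_mul k).neg_one_pow (α := ZMod p)

theorem neg_one_pow_mul_inv_mul_factorial_mul_factorial_sub {d : ℕ} (hd : 0 < d) (hdp : d < p) :
    (-1) ^ d * (d : ZMod p)⁻¹ * d ! * (p - d)! = 1 := by
  obtain ⟨k, rfl⟩ := Nat.exists_eq_add_one_of_ne_zero hd.ne'
  have hk : ((k + 1 : ℕ) : ZMod p) ≠ 0 := by
    rw [Ne, natCast_eq_zero_iff]
    exact Nat.not_dvd_of_pos_of_lt hd hdp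
  calc (-1) ^ (k + 1) * ((k + 1 : ℕ) : ZMod p)⁻¹ * (k + 1)! * (p - (k + 1))!
      = (-1) ^ (k + 1) * (((k + 1 : ℕ) : ZMod p)⁻¹ * (k + 1 : ℕ)) * (k ! * (p - 1 - k)!) := by
        rw [factorial_succ, show p - (k + 1) = p - 1 - k by omega]
        push_cast
        ring
    _ = 1 := by
        rw [inv_mul_cancel₀ hk, factorial_mul_factorial_sub_one_sub (by omega), mul_one, ← pow_add,
          ← two_mul, (even_two_mul _).neg_one_pow]

theorem neg_one_pow_mul_inv_mul_descFactorial_mul_descFactorial {a b d : ℕ} (hd : 0 < d)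
    (hdp : d < p) :
    (-1) ^ d * (d : ZMod p)⁻¹ * a.descFactorial d * b.descFactorial (p - d)
      = (a.choose d * b.choose (p - d) : ℕ) := by
  rw [descFactorial_eq_factorial_mul_choose, descFactorial_eq_factorial_mul_choose]
  push_cast
  linear_combination (a.choose d * b.choose (p - d) : ZMod p) *
    neg_one_pow_mul_inv_mul_factorial_mul_factorial_sub hd hdp

end ZMod

theorem stmt_7 (p : ℕ) (hp : p.Prime) (x₁ x₂ : ZMod p) :
    (((x₁.val + x₂.val) / p : ℕ) : ZMod p)
      = ∑ d ∈ Finset.Icc 1 (p - 1),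
          (-1 : ZMod p) ^ d * ((d : ZMod p))⁻¹ *
            (∏ k ∈ Finset.range d, (x₁ - (k : ZMod p))) *
            ∏ k ∈ Finset.range (p - d), (x₂ - (k : ZMod p)) := by
  have := Fact.mk hp
  have hprod (x : ZMod p) (d : ℕ) : ∏ k ∈ range d, (x - k) = x.val.descFactorial d := by
    conv_lhs => rw [← x.natCast_zmod_val]
    exact prod_range_natCast_sub_eq_descFactorial _ _
  rw [← ZMod.natCast_choose_prime,
    ← Nat.sum_Icc_choose_mul_choose_sub_eq_add_choose x₁.val_lt x₂.val_lt, Nat.cast_sum]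
  refine sum_congr rfl fun d hd => ?_
  rw [mem_Icc] at hd
  rw [hprod, hprod,
    ZMod.neg_one_pow_mul_inv_mul_descFactorial_mul_descFactorial (by omega) (by omega)]
end

section
/- Let p be a prime and define ψ_1 : F_p × F_p → F_p by ψ_1(x,y) = ⌊(x_Z · y_Z)/p⌋ mod p, the carry to the next digit in the multiplication of two base-p digits. Then for all x, y, z ∈ F_p: ψ_1(x,y)·z + ψ_1(xy, z) = x·ψ_1(y,z) + ψ_1(x, yz), where products like xy are taken in F_p. -/
/-! Write `c(a, b) = ⌊a_ℤ b_ℤ / n⌋` for the carry, so that `a_ℤ b_ℤ = (ab)_ℤ + n c(a, b)`.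
Expanding `x_ℤ y_ℤ z_ℤ` once as `(x_ℤ y_ℤ) z_ℤ` and once as `x_ℤ (y_ℤ z_ℤ)` gives `(xyz)_ℤ` plus
`n` times either side of the identity, computed in `ℕ`; cancelling `n` and reducing mod `n`
proves it. -/

namespace ZMod

theorem val_mul_val_eq_val_mul_add {n : ℕ} (a b : ZMod n) :
    a.val * b.val = (a * b).val + n * (a.val * b.val / n) := by
  rw [val_mul]
  exact (Nat.mod_add_div _ _).symm

theorem carry_cocycle {n : ℕ} [NeZero n] (x y z : ZMod n) :
    x.val * y.val / n * z.val + (x * y).val * z.val / n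
      = x.val * (y.val * z.val / n) + x.val * (y * z).val / n := by
  have hxy := val_mul_val_eq_val_mul_add x y
  have hxy_z := val_mul_val_eq_val_mul_add (x * y) z
  have hyz := val_mul_val_eq_val_mul_add y z
  have hx_yz := val_mul_val_eq_val_mul_add x (y * z)
  rw [← mul_assoc] at hx_yz
  refine Nat.eq_of_mul_eq_mul_left (NeZero.pos n) ?_
  zify at hxy hxy_z hyz hx_yz ⊢
  linear_combination x.val * hyz + hx_yz - z.val * hxy - hxy_z

end ZMod

theorem stmt_9 (p : ℕ) (hp : p.Prime) (x y z : ZMod p) :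
    (((x.val * y.val / p % p : ℕ) : ZMod p)) * z
        + (((x * y).val * z.val / p % p : ℕ) : ZMod p)
      = x * (((y.val * z.val / p % p : ℕ) : ZMod p))
          + ((x.val * (y * z).val / p % p : ℕ) : ZMod p) := by
  have : NeZero p := ⟨hp.ne_zero⟩
  have h := congrArg (Nat.cast : ℕ → ZMod p) (ZMod.carry_cocycle x y z)
  push_cast at h
  simpa only [ZMod.natCast_mod, ZMod.natCast_val, ZMod.cast_id] using h
end

section
/- Let p be an odd prime. There exists a function Ψ : F_p → F_p with Ψ(0) determined by the normalization such that for all x, y ∈ F_p, the multiplication carry ψ_1(x,y) := (⌊x_Z y_Z / p⌋ mod p) satisfies ψ_1(x,y) = xy·(Ψ(xy) − Ψ(x) − Ψ(y) + Ψ(1)). -/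
/-!
With the Fermat quotient `q(n) = (n ^ p - n) / p`, take `Ψ(a) = q(a_Z) / a` (and `Ψ(0) = 0`).
The identity `n ^ p = n + p q(n)` gives `q(ab) = a q(b) + b q(a) + p q(a) q(b)` exactly, and since
`(b + pc) ^ p ≡ b ^ p mod p²` it also gives `q(b + pc) ≡ q(b) - c mod p`. Applied to
`x_Z y_Z = (xy)_Z + p c` with `c` the carry, these yield `c ≡ q((xy)_Z) - x q(y_Z) - y q(x_Z)`,
which is the claimed formula since `q(1) = 0`.
-/

def fermatQuot (p : ℕ) (n : ℤ) : ℤ := (n ^ p - n) / p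

section FermatQuot

variable {p : ℕ}

theorem fermatQuot_one : fermatQuot p 1 = 0 := by
  simp [fermatQuot]

variable [Fact p.Prime]

theorem mul_fermatQuot (n : ℤ) : p * fermatQuot p n = n ^ p - n := by
  refine Int.mul_ediv_cancel' ((ZMod.intCast_zmod_eq_zero_iff_dvd _ p).mp ?_)
  push_cast
  rw [ZMod.pow_card, sub_self]

theorem pow_eq_add_mul_fermatQuot (n : ℤ) : n ^ p = n + p * fermatQuot p n := by
  rw [mul_fermatQuot]; ring

theorem fermatQuot_mul (a b : ℤ) :
    fermatQuot p (a * b) = a * fermatQuot p b + b * fermatQuot p a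
      + p * fermatQuot p a * fermatQuot p b := by
  have hp : (p : ℤ) ≠ 0 := by exact_mod_cast (Fact.out : p.Prime).ne_zero
  refine mul_left_cancel₀ hp ?_
  rw [mul_fermatQuot, mul_pow, pow_eq_add_mul_fermatQuot a, pow_eq_add_mul_fermatQuot b]
  ring

theorem fermatQuot_add_mul_cast (b c : ℤ) :
    (fermatQuot p (b + p * c) : ZMod p) = fermatQuot p b - c := by
  have hp : (p : ℤ) ≠ 0 := by exact_mod_cast (Fact.out : p.Prime).ne_zero
  -- `(b + p c) ^ p ≡ b ^ p` modulo `p²`, not merely modulo `p`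
  obtain ⟨k, hk⟩ : (p : ℤ) ^ 2 ∣ (b + p * c) ^ p - b ^ p := by
    simpa using dvd_sub_pow_of_dvd_sub (p := p) (a := b + p * c) (b := b) ⟨c, by ring⟩ 1
  have hdiff : fermatQuot p (b + p * c) - fermatQuot p b + c = p * k := by
    refine mul_left_cancel₀ hp ?_
    rw [mul_add, mul_sub, mul_fermatQuot, mul_fermatQuot]
    linear_combination hk
  have := congrArg (fun z : ℤ => (z : ZMod p)) hdiff
  push_cast [ZMod.natCast_self] at this
  linear_combination this

end FermatQuot

theorem carry_eq_fermatQuot {p : ℕ} [Fact p.Prime] (x y : ZMod p) :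
    ((x.val * y.val / p : ℕ) : ZMod p)
      = fermatQuot p (x * y).val - x * fermatQuot p y.val - y * fermatQuot p x.val := by
  have hsplit : (x.val * y.val : ℤ) = (x * y).val + p * (x.val * y.val / p : ℕ) := by
    rw [ZMod.val_mul]; exact_mod_cast (Nat.mod_add_div _ _).symm
  have hprod := congrArg (fun z : ℤ => (z : ZMod p)) (fermatQuot_mul (p := p) x.val y.val)
  rw [hsplit, fermatQuot_add_mul_cast] at hprod
  simp only [Int.cast_add, Int.cast_mul, Int.cast_natCast, ZMod.natCast_self,
    ZMod.natCast_zmod_val, zero_mul, add_zero] at hprod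
  linear_combination -hprod

theorem stmt_11_general (p : ℕ) (hp : p.Prime) :
    ∃ Ψ : ZMod p → ZMod p, ∀ x y : ZMod p,
      ((x.val * y.val / p % p : ℕ) : ZMod p)
        = x * y * (Ψ (x * y) - Ψ x - Ψ y + Ψ 1) := by
  have : Fact p.Prime := ⟨hp⟩
  refine ⟨fun a => fermatQuot p a.val * a⁻¹, fun x y => ?_⟩
  rcases eq_or_ne x 0 with rfl | hx
  · simp
  rcases eq_or_ne y 0 with rfl | hy
  · simp
  rw [ZMod.natCast_mod, carry_eq_fermatQuot]
  beta_reduce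
  rw [ZMod.val_one, Nat.cast_one, fermatQuot_one]
  field_simp
  ring

theorem stmt_11 (p : ℕ) (hp : p.Prime) (hodd : Odd p) :
    ∃ Ψ : ZMod p → ZMod p, ∀ x y : ZMod p,
      ((x.val * y.val / p % p : ℕ) : ZMod p)
        = x * y * (Ψ (x * y) - Ψ x - Ψ y + Ψ 1) :=
  stmt_11_general p hp
end

section
/- Let p be an odd prime. For every x ∈ F_p with x ≠ 0, define Ψ̄(x) ∈ F_p to be the image under reduction mod p of (x̃·[x]^{-1} − 1)/p, where x̃ ∈ (Z/p^2Z)^× is the lift of x via the representative in {1,...,p-1}, and [x] = x̃^p is the Teichmüller lift. Then for all nonzero x,y ∈ F_p: ψ_1(x,y)/(xy) = Ψ̄(x) + Ψ̄(y) − Ψ̄(xy), where ψ_1(x,y) = ⌊x_Z y_Z / p⌋ mod p. -/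
/-!
For a unit `a` of `ℤ/p²`, `a^p` only depends on `a mod p` (`dvd_sub_pow_of_dvd_sub`), so
`u_a := a · (a^p)⁻¹` is a principal unit, and `1 + p t ↦ t mod p` is a homomorphism from
principal units to `𝔽_p`; `Ψ̄(x)` is its value at `u_x̃`. Writing `x̃ ỹ = (xy)~ + p m` with
`m = ⌊x_ℤ y_ℤ / p⌋`, we get `[x][y] = [xy]`, hence `u_x̃ u_ỹ = u_(xy)~ + p m [xy]⁻¹`, and
applying the homomorphism gives `Ψ̄(x) + Ψ̄(y) = Ψ̄(xy) + m / (xy)`.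
-/

open ZMod

def reduceSq (n : ℕ) : ZMod (n ^ 2) →+* ZMod n :=
  castHom (dvd_pow_self n two_ne_zero) (ZMod n)

/-- `(u - 1) / n mod n`, meaningful for `u ≡ 1 mod n`. -/
def principalLog (n : ℕ) (u : ZMod (n ^ 2)) : ZMod n :=
  ((u - 1).val / n : ℕ)

def divTeichmuller (n : ℕ) (a : ZMod (n ^ 2)) : ZMod (n ^ 2) :=
  a * (a ^ n)⁻¹

section

variable {n : ℕ}

lemma reduceSq_natCast_val [NeZero n] (z : ZMod n) :
    reduceSq n (z.val : ZMod (n ^ 2)) = z := by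
  rw [map_natCast, natCast_zmod_val]

lemma reduceSq_inv {a : ZMod (n ^ 2)} (ha : IsUnit a) :
    reduceSq n a⁻¹ = (reduceSq n a)⁻¹ := by
  refine (ZMod.inv_eq_of_mul_eq_one _ _ _ ?_).symm
  rw [← map_mul, mul_inv_of_unit a ha, map_one]

lemma reduceSq_eq_zero_of_natCast_mul_eq_zero [NeZero n] {a : ZMod (n ^ 2)}
    (h : (n : ZMod (n ^ 2)) * a = 0) : reduceSq n a = 0 := by
  rw [← natCast_zmod_val a, ← Nat.cast_mul, natCast_eq_zero_iff] at h
  rw [← natCast_zmod_val a, map_natCast, natCast_eq_zero_iff]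
  exact Nat.dvd_of_mul_dvd_mul_left (NeZero.pos n) ((sq n).symm.dvd.trans h)

lemma eq_one_add_natCast_mul_of_reduceSq_eq_one [NeZero n] {u : ZMod (n ^ 2)}
    (h : reduceSq n u = 1) : u = 1 + n * (((u - 1).val / n : ℕ) : ZMod (n ^ 2)) := by
  have hdvd : n ∣ (u - 1).val := by
    rw [← natCast_eq_zero_iff, ← map_natCast (reduceSq n), natCast_zmod_val, map_sub, h, map_one,
      sub_self]
  rw [← Nat.cast_mul, Nat.mul_div_cancel' hdvd, natCast_zmod_val, add_sub_cancel]

lemma principalLog_one_add_natCast_mul [NeZero n] (t : ZMod (n ^ 2)) :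
    principalLog n (1 + (n : ZMod (n ^ 2)) * t) = reduceSq n t := by
  set d : ℕ := ((1 + (n : ZMod (n ^ 2)) * t) - 1).val / n
  have h : 1 + (n : ZMod (n ^ 2)) * t = 1 + n * d :=
    eq_one_add_natCast_mul_of_reduceSq_eq_one (by simp)
  have : reduceSq n (d - t) = 0 :=
    reduceSq_eq_zero_of_natCast_mul_eq_zero (by linear_combination -h)
  rwa [map_sub, map_natCast, sub_eq_zero] at this

lemma exists_eq_one_add_natCast_mul [NeZero n] {u : ZMod (n ^ 2)} (h : reduceSq n u = 1) :
    ∃ t, u = 1 + (n : ZMod (n ^ 2)) * t :=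
  ⟨_, eq_one_add_natCast_mul_of_reduceSq_eq_one h⟩

lemma principalLog_mul [NeZero n] {u v : ZMod (n ^ 2)} (hu : reduceSq n u = 1)
    (hv : reduceSq n v = 1) : principalLog n (u * v) = principalLog n u + principalLog n v := by
  obtain ⟨s, rfl⟩ := exists_eq_one_add_natCast_mul hu
  obtain ⟨t, rfl⟩ := exists_eq_one_add_natCast_mul hv
  rw [show (1 + (n : ZMod (n ^ 2)) * s) * (1 + n * t) = 1 + n * (s + t + n * s * t) by ring]
  simp only [principalLog_one_add_natCast_mul, map_add, map_mul, map_natCast, natCast_self,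
    zero_mul, add_zero]

lemma principalLog_add_natCast_mul [NeZero n] {u : ZMod (n ^ 2)} (hu : reduceSq n u = 1)
    (t : ZMod (n ^ 2)) :
    principalLog n (u + (n : ZMod (n ^ 2)) * t) = principalLog n u + reduceSq n t := by
  obtain ⟨s, rfl⟩ := exists_eq_one_add_natCast_mul hu
  rw [add_assoc, ← mul_add, principalLog_one_add_natCast_mul, principalLog_one_add_natCast_mul,
    map_add]

lemma pow_eq_pow_of_natCast_dvd_sub {a b : ZMod (n ^ 2)} (h : (n : ZMod (n ^ 2)) ∣ a - b) :
    a ^ n = b ^ n := by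
  have := dvd_sub_pow_of_dvd_sub h 1
  rwa [pow_one, ← Nat.cast_pow, natCast_self, zero_dvd_iff, sub_eq_zero] at this

lemma divTeichmuller_mul_of_mul_eq {a b c t : ZMod (n ^ 2)} (ha : IsUnit a) (hb : IsUnit b)
    (h : a * b = c + (n : ZMod (n ^ 2)) * t) :
    divTeichmuller n a * divTeichmuller n b =
      divTeichmuller n c + (n : ZMod (n ^ 2)) * (t * (c ^ n)⁻¹) := by
  have hpow : c ^ n = a ^ n * b ^ n := by
    rw [← mul_pow]
    exact pow_eq_pow_of_natCast_dvd_sub ⟨-t, by rw [h]; ring⟩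
  have hinv : (c ^ n)⁻¹ = (a ^ n)⁻¹ * (b ^ n)⁻¹ := by
    refine ZMod.inv_eq_of_mul_eq_one _ _ _ ?_
    rw [hpow, mul_mul_mul_comm, mul_inv_of_unit _ (ha.pow n), mul_inv_of_unit _ (hb.pow n), one_mul]
  simp only [divTeichmuller]
  linear_combination (a ^ n)⁻¹ * (b ^ n)⁻¹ * h - (c + n * t) * hinv

end

lemma reduceSq_divTeichmuller {p : ℕ} [Fact p.Prime] {a : ZMod (p ^ 2)} (ha : IsUnit a) :
    reduceSq p (divTeichmuller p a) = 1 := by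
  have : reduceSq p a ≠ 0 := (ha.map (reduceSq p)).ne_zero
  rw [divTeichmuller, map_mul, reduceSq_inv (ha.pow p), map_pow, pow_card, mul_inv_cancel₀ this]

lemma isUnit_natCast_val {p : ℕ} [Fact p.Prime] {z : ZMod p} (hz : z ≠ 0) (k : ℕ) :
    IsUnit (z.val : ZMod (p ^ k)) :=
  (isUnit_iff_coprime _ _).mpr ((val_coe_unit_coprime hz.isUnit.unit).pow_right k)

theorem stmt_12_general (p : ℕ) [Fact p.Prime]
    (Ψbar : ZMod p → ZMod p)
    (hΨbar : ∀ x : ZMod p, x ≠ 0 →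
      Ψbar x = ((((x.val : ZMod (p ^ 2)) * (((x.val : ZMod (p ^ 2))) ^ p)⁻¹ - 1).val
          / p : ℕ) : ZMod p))
    (x y : ZMod p) (hx : x ≠ 0) (hy : y ≠ 0) :
    ((x.val * y.val / p % p : ℕ) : ZMod p) / (x * y)
      = Ψbar x + Ψbar y - Ψbar (x * y) := by
  have hxy : x * y ≠ 0 := mul_ne_zero hx hy
  have unit : ∀ z : ZMod p, z ≠ 0 → IsUnit (z.val : ZMod (p ^ 2)) := fun _ hz ↦
    isUnit_natCast_val hz 2
  have hval : (x.val * y.val : ZMod (p ^ 2)) = (x * y).val + p * (x.val * y.val / p : ℕ) := by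
    rw [val_mul]
    exact_mod_cast congrArg (Nat.cast : ℕ → ZMod (p ^ 2))
      (Nat.mod_add_div (x.val * y.val) p).symm
  have hmul := divTeichmuller_mul_of_mul_eq (unit x hx) (unit y hy) hval
  have hlog := congrArg (principalLog p) hmul
  rw [principalLog_mul (reduceSq_divTeichmuller (unit x hx))
      (reduceSq_divTeichmuller (unit y hy)),
    principalLog_add_natCast_mul (reduceSq_divTeichmuller (unit _ hxy)), map_mul,
    reduceSq_inv ((unit _ hxy).pow p), map_pow, reduceSq_natCast_val, pow_card,
    map_natCast] at hlog
  rw [hΨbar x hx, hΨbar y hy, hΨbar _ hxy, natCast_mod, div_eq_mul_inv]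
  exact eq_sub_of_add_eq' hlog.symm

theorem stmt_12 (p : ℕ) [Fact p.Prime] (hodd : Odd p)
    (Ψbar : ZMod p → ZMod p)
    (hΨbar : ∀ x : ZMod p, x ≠ 0 →
      Ψbar x = ((((x.val : ZMod (p ^ 2)) * (((x.val : ZMod (p ^ 2))) ^ p)⁻¹ - 1).val
          / p : ℕ) : ZMod p))
    (x y : ZMod p) (hx : x ≠ 0) (hy : y ≠ 0) :
    ((x.val * y.val / p % p : ℕ) : ZMod p) / (x * y)
      = Ψbar x + Ψbar y - Ψbar (x * y) :=
  stmt_12_general p Ψbar hΨbar x y hx hy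
end

section
/- Let p be an odd prime and x ∈ {1,...,p-1}. Define the Fermat quotient q_p(x) = (x^{p-1} − 1)/p ∈ Z. Then, with Ψ̄ as in the cohomological construction (Ψ̄(x) = ((x̃[x]^{-1} − 1)/p) mod p), we have x·Ψ̄(x) = −x·(q_p(x) mod p) in F_p, i.e., Ψ̄(x) = −q_p(x) mod p. -/
/-!
By Fermat, `x ^ (p - 1) = 1 + p q` with `q` the Fermat quotient. In `ZMod (p ^ 2)` the element
`p q` squares to zero, so `x / x ^ p = (1 + p q)⁻¹ = 1 - p q`, i.e. `x / x ^ p - 1 = p (-q)`. The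
canonical representative of any `p k` in `ZMod (p ^ 2)` is `p (k + p t)` for some integer `t`,
so dividing it by `p` and reducing modulo `p` gives back `k`.
-/

theorem Nat.pow_card_sub_one_eq_one_add_mul_div {p x : ℕ} (hp : p.Prime) (hx : x.Coprime p) :
    x ^ (p - 1) = 1 + p * ((x ^ (p - 1) - 1) / p) := by
  rw [Nat.mul_div_cancel' (Nat.dvd_of_mod_eq_zero (Nat.pow_card_sub_one_sub_one_mod_card hp hx))]
  have := Nat.one_le_pow (p - 1) x (Nat.pos_of_ne_zero fun h => hp.ne_one (by simpa [h] using hx))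
  omega

namespace ZMod

theorem mul_inv_eq_of_eq_mul {n : ℕ} {a b c : ZMod n} (ha : IsUnit a) (h : b = a * c) :
    b * a⁻¹ = c := by
  rw [h, mul_right_comm, mul_inv_of_unit a ha, one_mul]

theorem mul_inv_pow_succ_eq_one_sub {n k : ℕ} {u ε : ZMod n} (hu : IsUnit u) (hε : ε ^ 2 = 0)
    (h : u ^ k = 1 + ε) : u * (u ^ (k + 1))⁻¹ = 1 - ε :=
  mul_inv_eq_of_eq_mul (hu.pow _) <| by
    rw [pow_succ', h]
    linear_combination u * hε

theorem natCast_mul_sq_eq_zero (p q : ℕ) : ((p : ZMod (p ^ 2)) * q) ^ 2 = 0 := by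
  rw [mul_pow, ← Nat.cast_pow, natCast_self, zero_mul]

theorem natCast_val_div_eq_of_eq_mul {p : ℕ} [NeZero p] {z : ZMod (p ^ 2)} {k : ℤ}
    (h : z = p * k) : ((z.val / p : ℕ) : ZMod p) = k := by
  obtain ⟨t, ht⟩ : ((p ^ 2 : ℕ) : ℤ) ∣ z.val - p * k := by
    rw [← ZMod.intCast_zmod_eq_zero_iff_dvd]
    push_cast
    rw [natCast_zmod_val, h, sub_self]
  have hval : (z.val : ℤ) = p * (k + p * t) := by
    push_cast at ht
    linear_combination ht
  have hdiv : ((z.val / p : ℕ) : ℤ) = k + p * t := by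
    rw [Int.natCast_div, hval, Int.mul_ediv_cancel_left _ (by exact_mod_cast NeZero.ne p)]
  rw [← Int.cast_natCast, hdiv]
  simp

end ZMod

theorem stmt_14_general (p x : ℕ) (hp : p.Prime)
    (hx1 : 1 ≤ x) (hx2 : x ≤ p - 1) :
    (((((x : ZMod (p ^ 2)) * (((x : ZMod (p ^ 2))) ^ p)⁻¹ - 1).val / p : ℕ) : ZMod p)
      = -(((x ^ (p - 1) - 1) / p : ℕ) : ZMod p)) := by
  have : NeZero p := ⟨hp.ne_zero⟩
  have hx : x.Coprime p := (Nat.coprime_of_lt_prime (by omega) (by omega) hp).symm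
  set q := (x ^ (p - 1) - 1) / p
  have hu : IsUnit (x : ZMod (p ^ 2)) := (ZMod.isUnit_iff_coprime x _).mpr (hx.pow_right 2)
  have hpow : (x : ZMod (p ^ 2)) ^ (p - 1) = 1 + p * q := by
    rw [← Nat.cast_pow, Nat.pow_card_sub_one_eq_one_add_mul_div hp hx, Nat.cast_add, Nat.cast_one,
      Nat.cast_mul]
  have key := ZMod.mul_inv_pow_succ_eq_one_sub hu (ZMod.natCast_mul_sq_eq_zero p q) hpow
  rw [Nat.sub_add_cancel hp.one_lt.le] at key
  rw [ZMod.natCast_val_div_eq_of_eq_mul (k := -q) (by rw [key]; push_cast; ring), Int.cast_neg,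
    Int.cast_natCast]

theorem stmt_14 (p x : ℕ) (hp : p.Prime) (hodd : Odd p)
    (hx1 : 1 ≤ x) (hx2 : x ≤ p - 1) :
    (((((x : ZMod (p ^ 2)) * (((x : ZMod (p ^ 2))) ^ p)⁻¹ - 1).val / p : ℕ) : ZMod p)
      = -(((x ^ (p - 1) - 1) / p : ℕ) : ZMod p)) :=
  stmt_14_general p x hp hx1 hx2
end

section
/- For addition of two single base-p digits with an incoming carry: for all x_1, x_2 ∈ F_p and γ ∈ {0,1} ⊂ F_p, the carry ⌊((x_1)_Z + (x_2)_Z + γ_Z)/p⌋ (as an element of F_p) equals φ_1(x_1,x_2) + γ·(1 − (x_1 + x_2 + 1)^{p-1}), where φ_1(x_1,x_2) = ⌊((x_1)_Z + (x_2)_Z)/p⌋ mod p. -/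
/-! The incoming carry raises the outgoing one exactly when `x₁ + x₂ + 1` is a multiple of `p`,
i.e. vanishes in `𝔽_p`, and by Fermat's little theorem `1 - a ^ (p - 1)` is the indicator of
`a = 0`. -/

namespace ZMod

theorem natCast_add_one_div (s p : ℕ) :
    (((s + 1) / p : ℕ) : ZMod p) =
      ((s / p : ℕ) : ZMod p) + if (s : ZMod p) + 1 = 0 then 1 else 0 := by
  simp only [Nat.succ_div, ← Nat.cast_add_one, natCast_eq_zero_iff]
  split_ifs <;> simp

theorem one_sub_pow_card_sub_one {p : ℕ} [Fact p.Prime] (a : ZMod p) :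
    1 - a ^ (p - 1) = if a = 0 then 1 else 0 := by
  rw [pow_card_sub_one]
  split_ifs <;> simp_all

end ZMod

theorem stmt_18 (p : ℕ) (hp : p.Prime) (x₁ x₂ γ : ZMod p) (hγ : γ = 0 ∨ γ = 1) :
    (((x₁.val + x₂.val + γ.val) / p : ℕ) : ZMod p)
      = (((x₁.val + x₂.val) / p % p : ℕ) : ZMod p)
          + γ * (1 - (x₁ + x₂ + 1) ^ (p - 1)) := by
  have := Fact.mk hp
  rw [ZMod.natCast_mod]
  rcases hγ with rfl | rfl
  · simp
  · rw [ZMod.val_one, ZMod.natCast_add_one_div, ZMod.one_sub_pow_card_sub_one, one_mul]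
    simp only [Nat.cast_add, ZMod.natCast_val, ZMod.cast_id', id]
end
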